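/- Let H1 and H2 be complex Hilbert spaces and let S1 ⊆ B(H1) and S2 ⊆ B(H2) be multiplicative semigroups each containing the identity operator of its space. Then S1 and S2 are both selfadjoint-ideal (SI) semigroups if and only if the direct sum S1 ⊕ S2 := {A ⊕ B : A ∈ S1, B ∈ S2}, a semigroup of bounded operators on the Hilbert space direct sum H1 ⊕ H2, is an SI semigroup. -/
import Mathlib


open ContinuousLinearMap

variable {H1 H2 : Type*} [NormedAddCommGroup H1] [InnerProductSpace ℂ H1] [CompleteSpace H1]
  [NormedAddCommGroup H2] [InnerProductSpace ℂ H2] [CompleteSpace H2]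

/-- A multiplicative semigroup of operators: a set closed under composition. -/
def IsMulSemigroup {M : Type*} [Mul M] (S : Set M) : Prop :=
  ∀ A ∈ S, ∀ B ∈ S, A * B ∈ S

/-- `J` is a (two-sided) semigroup-ideal of `S`. -/
def IsSemigroupIdeal {M : Type*} [Mul M] (S J : Set M) : Prop :=
  J ⊆ S ∧ ∀ T ∈ J, ∀ X ∈ S, X * T ∈ J ∧ T * X ∈ J

/-- `S` is a selfadjoint-ideal (SI) semigroup: every semigroup-ideal of `S`
is closed under adjoints. -/
def IsSI {E : Type*} [NormedAddCommGroup E] [InnerProductSpace ℂ E] [CompleteSpace E]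
    (S : Set (E →L[ℂ] E)) : Prop :=
  ∀ J : Set (E →L[ℂ] E), IsSemigroupIdeal S J → ∀ T ∈ J, adjoint T ∈ J

/-- `S` is simple: every ideal of `S` containing a nonzero element equals `S`. -/
def IsSimpleSemigroup {M : Type*} [Mul M] [Zero M] (S : Set M) : Prop :=
  ∀ J : Set M, IsSemigroupIdeal S J → (∃ T ∈ J, T ≠ 0) → J = S

/-- The block-diagonal operator `A ⊕ B` on the Hilbert-space direct sum
`H1 ⊕ H2 = WithLp 2 (H1 × H2)`, acting as `A` on `H1` and as `B` on `H2`. -/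
noncomputable def dsum (A : H1 →L[ℂ] H1) (B : H2 →L[ℂ] H2) :
    WithLp 2 (H1 × H2) →L[ℂ] WithLp 2 (H1 × H2) :=
  ((WithLp.prodContinuousLinearEquiv 2 ℂ H1 H2).symm : H1 × H2 →L[ℂ] WithLp 2 (H1 × H2)) ∘L
    (A.prodMap B) ∘L
    ((WithLp.prodContinuousLinearEquiv 2 ℂ H1 H2) : WithLp 2 (H1 × H2) →L[ℂ] H1 × H2)


lemma dsum_mul (A C : H1 →L[ℂ] H1) (B D : H2 →L[ℂ] H2) :
    dsum A B * dsum C D = dsum (A * C) (B * D) := by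
  ext x <;> simp [dsum, mul_apply, Prod.map]

lemma dsum_adjoint (A : H1 →L[ℂ] H1) (B : H2 →L[ℂ] H2) :
    adjoint (dsum A B) = dsum (adjoint A) (adjoint B) := by
  symm
  rw [eq_adjoint_iff]
  intro x y
  simp [dsum, WithLp.prod_inner_apply, adjoint_inner_left, adjoint_inner_right]

lemma dsum_inj {A C : H1 →L[ℂ] H1} {B D : H2 →L[ℂ] H2} (h : dsum A B = dsum C D) :
    A = C ∧ B = D := by
  constructor
  · ext x
    have := congrFun (congrArg DFunLike.coe h) ((WithLp.prodContinuousLinearEquiv 2 ℂ H1 H2).symm (x, 0))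
    simpa [dsum] using congrArg Prod.fst (congrArg (WithLp.prodContinuousLinearEquiv 2 ℂ H1 H2) this)
  · ext x
    have := congrFun (congrArg DFunLike.coe h) ((WithLp.prodContinuousLinearEquiv 2 ℂ H1 H2).symm (0, x))
    simpa [dsum] using congrArg Prod.snd (congrArg (WithLp.prodContinuousLinearEquiv 2 ℂ H1 H2) this)

set_option linter.unusedSectionVars false

lemma adj_one {E : Type*} [NormedAddCommGroup E] [InnerProductSpace ℂ E] [CompleteSpace E] :
    adjoint (1 : E →L[ℂ] E) = 1 :=
  ((eq_adjoint_iff 1 1).mpr (fun _ _ => rfl)).symm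

lemma si_key {E : Type*} [NormedAddCommGroup E] [InnerProductSpace ℂ E] [CompleteSpace E]
    (S : Set (E →L[ℂ] E)) (hS : IsMulSemigroup S) (h1 : (1 : E →L[ℂ] E) ∈ S)
    (hSI : IsSI S) {A : E →L[ℂ] E} (hA : A ∈ S) :
    ∃ X ∈ S, ∃ Y ∈ S, adjoint A = X * A * Y := by
  set J : Set (E →L[ℂ] E) := {T | ∃ X ∈ S, ∃ Y ∈ S, T = X * A * Y} with hJ
  have hideal : IsSemigroupIdeal S J := by
    constructor
    · rintro T ⟨X, hX, Y, hY, rfl⟩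
      exact hS _ (hS _ hX _ hA) _ hY
    · rintro T ⟨X, hX, Y, hY, rfl⟩ Z hZ
      constructor
      · exact ⟨Z * X, hS _ hZ _ hX, Y, hY, by simp [mul_assoc]⟩
      · exact ⟨X, hX, Y * Z, hS _ hY _ hZ, by simp [mul_assoc]⟩
  have hmem : A ∈ J := ⟨1, h1, 1, h1, by simp⟩
  exact hSI J hideal A hmem

/-- for unital semigroups `S1 ⊆ B(H1)` and `S2 ⊆ B(H2)`, both are SI
iff the direct sum `S1 ⊕ S2 = {A ⊕ B : A ∈ S1, B ∈ S2} ⊆ B(H1 ⊕ H2)` is SI. -/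
theorem stmt18 (S1 : Set (H1 →L[ℂ] H1)) (S2 : Set (H2 →L[ℂ] H2))
    (hS1 : IsMulSemigroup S1) (hS2 : IsMulSemigroup S2)
    (h1 : (1 : H1 →L[ℂ] H1) ∈ S1) (h2 : (1 : H2 →L[ℂ] H2) ∈ S2) :
    (IsSI S1 ∧ IsSI S2) ↔ IsSI {C | ∃ A ∈ S1, ∃ B ∈ S2, C = dsum A B} := by
  constructor
  · rintro ⟨hSI1, hSI2⟩ J ⟨hJS, hJideal⟩ T hT
    obtain ⟨A, hA, B, hB, rfl⟩ := hJS hT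
    obtain ⟨X1, hX1, Y1, hY1, hAeq⟩ := si_key S1 hS1 h1 hSI1 hA
    obtain ⟨X2, hX2, Y2, hY2, hBeq⟩ := si_key S2 hS2 h2 hSI2 hB
    have key : adjoint (dsum A B) = dsum X1 X2 * dsum A B * dsum Y1 Y2 := by
      rw [dsum_adjoint, hAeq, hBeq, dsum_mul, dsum_mul]
    rw [key]
    have hX : dsum X1 X2 ∈ {C | ∃ A ∈ S1, ∃ B ∈ S2, C = dsum A B} := ⟨X1, hX1, X2, hX2, rfl⟩
    have hY : dsum Y1 Y2 ∈ {C | ∃ A ∈ S1, ∃ B ∈ S2, C = dsum A B} := ⟨Y1, hY1, Y2, hY2, rfl⟩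
    exact (hJideal _ ((hJideal _ hT _ hX).1) _ hY).2
  · intro hSI
    constructor
    · intro J1 ⟨hJ1S, hid⟩ T hT
      set J : Set (WithLp 2 (H1 × H2) →L[ℂ] WithLp 2 (H1 × H2)) :=
        {C | ∃ A ∈ J1, ∃ B ∈ S2, C = dsum A B} with hJ
      have hideal : IsSemigroupIdeal {C | ∃ A ∈ S1, ∃ B ∈ S2, C = dsum A B} J := by
        constructor
        · rintro C ⟨A, hA, B, hB, rfl⟩
          exact ⟨A, hJ1S hA, B, hB, rfl⟩
        · rintro C ⟨A, hA, B, hB, rfl⟩ X ⟨X1, hX1, X2, hX2, rfl⟩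
          refine ⟨⟨X1 * A, (hid A hA X1 hX1).1, X2 * B, hS2 _ hX2 _ hB, (dsum_mul ..)⟩,
            ⟨A * X1, (hid A hA X1 hX1).2, B * X2, hS2 _ hB _ hX2, (dsum_mul ..)⟩⟩
      have hmem : dsum T 1 ∈ J := ⟨T, hT, 1, h2, rfl⟩
      have := hSI J hideal _ hmem
      rw [dsum_adjoint, adj_one] at this
      obtain ⟨A, hA, B, hB, heq⟩ := this
      rw [(dsum_inj heq).1]
      exact hA
    · intro J2 ⟨hJ2S, hid⟩ T hT
      set J : Set (WithLp 2 (H1 × H2) →L[ℂ] WithLp 2 (H1 × H2)) :=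
        {C | ∃ A ∈ S1, ∃ B ∈ J2, C = dsum A B} with hJ
      have hideal : IsSemigroupIdeal {C | ∃ A ∈ S1, ∃ B ∈ S2, C = dsum A B} J := by
        constructor
        · rintro C ⟨A, hA, B, hB, rfl⟩
          exact ⟨A, hA, B, hJ2S hB, rfl⟩
        · rintro C ⟨A, hA, B, hB, rfl⟩ X ⟨X1, hX1, X2, hX2, rfl⟩
          refine ⟨⟨X1 * A, hS1 _ hX1 _ hA, X2 * B, (hid B hB X2 hX2).1, (dsum_mul ..)⟩,
            ⟨A * X1, hS1 _ hA _ hX1, B * X2, (hid B hB X2 hX2).2, (dsum_mul ..)⟩⟩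
      have hmem : dsum 1 T ∈ J := ⟨1, h1, T, hT, rfl⟩
      have := hSI J hideal _ hmem
      rw [dsum_adjoint, adj_one] at this
      obtain ⟨A, hA, B, hB, heq⟩ := this
      rw [(dsum_inj heq).2]
      exact hB
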